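/- (Optimal sampling beats importance sampling.) Let κ_j > 0, ρ ∈ (0,1), κ̃_j = 1 + κ_j/ρ², and n ≥ 1. Define ν = min_j √κ_j/(1 + √κ̃_j), θ_imp = 1 − 2ν/Σ_{j=1}^n √κ_j, and θ_opt = 1 − 2/(n + Σ_{j=1}^n √κ̃_j). Then θ_imp ≥ θ_opt. -/
import Mathlib


/-- Optimal sampling beats importance sampling.
With `κ_j > 0`, `ρ ∈ (0,1)`, `κ̃_j = 1 + κ_j/ρ²`, `n ≥ 1`,
`ν = min_j √κ_j/(1 + √κ̃_j)`, `θ_imp = 1 − 2ν/Σ_j √κ_j` and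
`θ_opt = 1 − 2/(n + Σ_j √κ̃_j)` satisfy `θ_imp ≥ θ_opt`. -/
theorem spdhg_optimal_beats_importance {n : ℕ} (hn : 1 ≤ n) (κ : Fin n → ℝ) (ρ : ℝ)
    (hκ : ∀ j, 0 < κ j) (hρ : ρ ∈ Set.Ioo (0 : ℝ) 1) :
    let sqκt : Fin n → ℝ := fun j => Real.sqrt (1 + κ j / ρ ^ 2)
    let ν : ℝ := Finset.univ.inf' (Finset.univ_nonempty_iff.mpr ⟨⟨0, by omega⟩⟩)
      (fun j => Real.sqrt (κ j) / (1 + sqκt j))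
    let θimp : ℝ := 1 - 2 * ν / (∑ j, Real.sqrt (κ j))
    let θopt : ℝ := 1 - 2 / ((n : ℝ) + ∑ j, sqκt j)
    θopt ≤ θimp := by
  intro sqκt ν θimp θopt
  have hρ2 : 0 < ρ ^ 2 := pow_pos hρ.1 2
  have hsqκt_pos : ∀ j, 0 < sqκt j := fun j =>
    Real.sqrt_pos.mpr (by have := div_pos (hκ j) hρ2; linarith)
  have hden_pos : ∀ j, (0:ℝ) < 1 + sqκt j := fun j => by linarith [hsqκt_pos j]
  have hsq_pos : ∀ j, 0 < Real.sqrt (κ j) := fun j => Real.sqrt_pos.mpr (hκ j)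
  have hne : (Finset.univ : Finset (Fin n)).Nonempty :=
    Finset.univ_nonempty_iff.mpr ⟨⟨0, by omega⟩⟩
  -- ν ≤ each term, ν ≥ 0
  have hν_le : ∀ j, ν ≤ Real.sqrt (κ j) / (1 + sqκt j) := fun j =>
    Finset.inf'_le _ (Finset.mem_univ j)
  have hν_pos : 0 < ν := by
    apply (Finset.lt_inf'_iff _).mpr
    intro j _
    exact div_pos (hsq_pos j) (hden_pos j)
  have hkey : ∀ j, ν * (1 + sqκt j) ≤ Real.sqrt (κ j) := fun j =>
    (le_div_iff₀ (hden_pos j)).mp (hν_le j)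
  have hS1 : 0 < ∑ j, Real.sqrt (κ j) :=
    Finset.sum_pos (fun j _ => hsq_pos j) hne
  have hS2 : (0:ℝ) < (n : ℝ) + ∑ j, sqκt j := by
    have : 0 < ∑ j, sqκt j := Finset.sum_pos (fun j _ => hsqκt_pos j) hne
    have : (0:ℝ) ≤ (n:ℝ) := Nat.cast_nonneg n
    linarith [Finset.sum_pos (fun j (_ : j ∈ Finset.univ) => hsqκt_pos j) hne]
  have hsum : ν * ((n : ℝ) + ∑ j, sqκt j) ≤ ∑ j, Real.sqrt (κ j) := by
    have h := Finset.sum_le_sum (fun j (_ : j ∈ Finset.univ) => hkey j)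
    have hsum' : ∑ j, (1 + sqκt j) = (n:ℝ) + ∑ j, sqκt j := by
      rw [Finset.sum_add_distrib, Finset.sum_const, Finset.card_univ, Fintype.card_fin,
        nsmul_eq_mul, mul_one]
    calc ν * ((n : ℝ) + ∑ j, sqκt j) = ∑ j, ν * (1 + sqκt j) := by
          rw [← Finset.mul_sum, hsum']
      _ ≤ ∑ j, Real.sqrt (κ j) := h
  show 1 - 2 / ((n : ℝ) + ∑ j, sqκt j) ≤ 1 - 2 * ν / (∑ j, Real.sqrt (κ j))
  have : 2 * ν / (∑ j, Real.sqrt (κ j)) ≤ 2 / ((n : ℝ) + ∑ j, sqκt j) := by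
    rw [div_le_div_iff₀ hS1 hS2]
    nlinarith
  linarith
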